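/- arXiv:dg-ga/9607003 — 3 statements merged into one kernel-verified Lean document; each statement's English description precedes it below -/
import Mathlib

section
/- If P is a monic polynomial over the complex numbers with distinct roots β_1,...,β_s of multiplicities m_1,...,m_s, and v = P'/P is its logarithmic derivative, then v' + v^2 = Σ_i (m_i^2 - m_i)/(x - β_i)^2 + Σ_{i≠j} 2 m_i m_j / ((β_i - β_j)(x - β_i)), as rational functions. -/
/-!
The left side is `δ P + (ℓ P)²`, where `ℓ P = P'/P` and `δ P = (P''P - P'²)/P²` is its derivative
by the quotient rule. Both `ℓ` and `δ` are additive on products of nonzero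
polynomials, so for `P = ∏ (X - βᵢ)^mᵢ` they equal `∑ mᵢ/(X - βᵢ)` and `-∑ mᵢ/(X - βᵢ)²`.
Squaring the first sum, each cross term `mᵢmⱼ/((X - βᵢ)(X - βⱼ))` splits into partial fractions
`mᵢmⱼ/(βᵢ - βⱼ) · (1/(X - βᵢ) - 1/(X - βⱼ))`, and symmetrising over ordered pairs gives the factor 2.
-/

open Polynomial

theorem Finset.apply_prod_eq_sum_of_apply_mul {ι M A : Type*} [CommMonoidWithZero M]
    [NoZeroDivisors M] [Nontrivial M] [AddCommMonoid A] (φ : M → A) (h_one : φ 1 = 0)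
    (h_mul : ∀ p q, p ≠ 0 → q ≠ 0 → φ (p * q) = φ p + φ q)
    (s : Finset ι) (f : ι → M) (hf : ∀ i ∈ s, f i ≠ 0) :
    φ (∏ i ∈ s, f i) = ∑ i ∈ s, φ (f i) := by
  classical
  induction s using Finset.induction_on with
  | empty => simpa using h_one
  | insert a s ha ih =>
    have hs : ∀ i ∈ s, f i ≠ 0 := fun i hi => hf i (Finset.mem_insert_of_mem hi)
    rw [Finset.prod_insert ha, Finset.sum_insert ha,
      h_mul _ _ (hf a (Finset.mem_insert_self a s)) (Finset.prod_ne_zero_iff.2 hs), ih hs]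

theorem apply_pow_eq_nsmul_of_apply_mul {M A : Type*} [CommMonoidWithZero M]
    [NoZeroDivisors M] [Nontrivial M] [AddCommMonoid A] (φ : M → A) (h_one : φ 1 = 0)
    (h_mul : ∀ p q, p ≠ 0 → q ≠ 0 → φ (p * q) = φ p + φ q) {p : M} (hp : p ≠ 0) (n : ℕ) :
    φ (p ^ n) = n • φ p := by
  simpa using Finset.apply_prod_eq_sum_of_apply_mul φ h_one h_mul (Finset.range n) (fun _ => p)
    (fun _ _ => hp)

namespace Polynomial

variable {K : Type*} [Field K]

noncomputable def ratLogDeriv (p : K[X]) : RatFunc K :=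
  algebraMap K[X] (RatFunc K) (derivative p) / algebraMap K[X] (RatFunc K) p

/-- The derivative of `ratLogDeriv p`, by the quotient rule. -/
noncomputable def derivRatLogDeriv (p : K[X]) : RatFunc K :=
  (algebraMap K[X] (RatFunc K) (derivative (derivative p)) * algebraMap K[X] (RatFunc K) p -
    algebraMap K[X] (RatFunc K) (derivative p) ^ 2) / algebraMap K[X] (RatFunc K) p ^ 2

theorem ratLogDeriv_one : ratLogDeriv (1 : K[X]) = 0 := by simp [ratLogDeriv]

theorem derivRatLogDeriv_one : derivRatLogDeriv (1 : K[X]) = 0 := by simp [derivRatLogDeriv]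

theorem ratLogDeriv_mul {p q : K[X]} (hp : p ≠ 0) (hq : q ≠ 0) :
    ratLogDeriv (p * q) = ratLogDeriv p + ratLogDeriv q := by
  have := RatFunc.algebraMap_ne_zero hp
  have := RatFunc.algebraMap_ne_zero hq
  simp only [ratLogDeriv, derivative_mul, map_add, map_mul]
  field_simp

theorem derivRatLogDeriv_mul {p q : K[X]} (hp : p ≠ 0) (hq : q ≠ 0) :
    derivRatLogDeriv (p * q) = derivRatLogDeriv p + derivRatLogDeriv q := by
  have := RatFunc.algebraMap_ne_zero hp
  have := RatFunc.algebraMap_ne_zero hq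
  simp only [derivRatLogDeriv, derivative_mul, map_add, map_mul]
  field_simp
  ring

theorem algebraMap_X_sub_C (a : K) :
    algebraMap K[X] (RatFunc K) (X - C a) = RatFunc.X - algebraMap K (RatFunc K) a := by
  rw [map_sub, RatFunc.algebraMap_X, RatFunc.algebraMap_C, RatFunc.algebraMap_eq_C]

theorem ratLogDeriv_X_sub_C (a : K) :
    ratLogDeriv (X - C a) = (RatFunc.X - algebraMap K (RatFunc K) a)⁻¹ := by
  simp [ratLogDeriv, algebraMap_X_sub_C]

theorem derivRatLogDeriv_X_sub_C (a : K) :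
    derivRatLogDeriv (X - C a) = -((RatFunc.X - algebraMap K (RatFunc K) a) ^ 2)⁻¹ := by
  simp [derivRatLogDeriv, algebraMap_X_sub_C, neg_div]

theorem ratLogDeriv_prod_X_sub_C_pow {ι : Type*} (s : Finset ι) (a : ι → K) (m : ι → ℕ) :
    ratLogDeriv (∏ i ∈ s, (X - C (a i)) ^ m i) =
      ∑ i ∈ s, (m i : RatFunc K) / (RatFunc.X - algebraMap K (RatFunc K) (a i)) := by
  rw [Finset.apply_prod_eq_sum_of_apply_mul _ ratLogDeriv_one (fun _ _ => ratLogDeriv_mul) s _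
    fun i _ => pow_ne_zero _ (X_sub_C_ne_zero (a i))]
  refine Finset.sum_congr rfl fun i _ => ?_
  rw [apply_pow_eq_nsmul_of_apply_mul _ ratLogDeriv_one (fun _ _ => ratLogDeriv_mul)
    (X_sub_C_ne_zero (a i)), ratLogDeriv_X_sub_C, nsmul_eq_mul, div_eq_mul_inv]

theorem derivRatLogDeriv_prod_X_sub_C_pow {ι : Type*} (s : Finset ι) (a : ι → K) (m : ι → ℕ) :
    derivRatLogDeriv (∏ i ∈ s, (X - C (a i)) ^ m i) =
      ∑ i ∈ s, -(m i : RatFunc K) / (RatFunc.X - algebraMap K (RatFunc K) (a i)) ^ 2 := by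
  rw [Finset.apply_prod_eq_sum_of_apply_mul _ derivRatLogDeriv_one
    (fun _ _ => derivRatLogDeriv_mul) s _ fun i _ => pow_ne_zero _ (X_sub_C_ne_zero (a i))]
  refine Finset.sum_congr rfl fun i _ => ?_
  rw [apply_pow_eq_nsmul_of_apply_mul _ derivRatLogDeriv_one (fun _ _ => derivRatLogDeriv_mul)
    (X_sub_C_ne_zero (a i)), derivRatLogDeriv_X_sub_C, nsmul_eq_mul, neg_div, div_eq_mul_inv,
    mul_neg]

end Polynomial

theorem sq_sum_div_sub_eq {ι F : Type*} [Fintype ι] [DecidableEq ι] [Field F] (x : F)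
    {b : ι → F} (hb : Function.Injective b) (hx : ∀ i, x - b i ≠ 0) (c : ι → F) :
    (∑ i, c i / (x - b i)) ^ 2 =
      ∑ i, c i ^ 2 / (x - b i) ^ 2 +
        ∑ i, ∑ j ∈ Finset.univ.filter (· ≠ i), 2 * c i * c j / (b i - b j) / (x - b i) := by
  have h_pair : ∀ i, ∀ j ∈ Finset.univ.filter (· ≠ i),
      c i / (x - b i) * (c j / (x - b j)) =
        c i * c j / (b i - b j) / (x - b i) + c j * c i / (b j - b i) / (x - b j) := by
    intro i j hj
    have hij : j ≠ i := (Finset.mem_filter.1 hj).2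
    have := hx i; have := hx j
    have := sub_ne_zero.2 (hb.ne hij); have := sub_ne_zero.2 (hb.ne hij.symm)
    field_simp
    ring
  have h_swap : ∑ i, ∑ j ∈ Finset.univ.filter (· ≠ i), c j * c i / (b j - b i) / (x - b j) =
      ∑ i, ∑ j ∈ Finset.univ.filter (· ≠ i), c i * c j / (b i - b j) / (x - b i) :=
    Finset.sum_comm' fun i j => by simp [ne_comm]
  calc (∑ i, c i / (x - b i)) ^ 2
      = ∑ i, (c i / (x - b i) * (c i / (x - b i)) +
          ∑ j ∈ Finset.univ.filter (· ≠ i), c i / (x - b i) * (c j / (x - b j))) := by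
        rw [sq, Finset.sum_mul_sum]
        refine Finset.sum_congr rfl fun i _ => ?_
        rw [Finset.filter_ne',
          Finset.add_sum_erase _ (fun j => c i / (x - b i) * (c j / (x - b j))) (Finset.mem_univ i)]
    _ = ∑ i, (c i ^ 2 / (x - b i) ^ 2 +
          ∑ j ∈ Finset.univ.filter (· ≠ i), (c i * c j / (b i - b j) / (x - b i) +
            c j * c i / (b j - b i) / (x - b j))) := by
        refine Finset.sum_congr rfl fun i _ => ?_
        rw [Finset.sum_congr rfl (h_pair i), div_mul_div_comm, ← sq, ← sq]
    _ = _ := by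
        rw [Finset.sum_add_distrib, Finset.sum_congr rfl fun i _ => Finset.sum_add_distrib,
          Finset.sum_add_distrib, h_swap, ← Finset.sum_add_distrib]
        congr 1
        refine Finset.sum_congr rfl fun i _ => ?_
        rw [← Finset.sum_add_distrib]
        refine Finset.sum_congr rfl fun j _ => ?_
        ring

theorem stmt_0_general (s : ℕ) (β : Fin s → ℂ) (hβ : Function.Injective β)
    (m : Fin s → ℕ)
    (P : Polynomial ℂ) (hP : P = ∏ i, (X - C (β i)) ^ m i)
    (v : RatFunc ℂ)
    (hv : v = algebraMap (Polynomial ℂ) (RatFunc ℂ) (derivative P) /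
        algebraMap (Polynomial ℂ) (RatFunc ℂ) P) :
    (algebraMap (Polynomial ℂ) (RatFunc ℂ) (derivative (derivative P)) *
        algebraMap (Polynomial ℂ) (RatFunc ℂ) P -
      (algebraMap (Polynomial ℂ) (RatFunc ℂ) (derivative P)) ^ 2) /
        (algebraMap (Polynomial ℂ) (RatFunc ℂ) P) ^ 2 + v ^ 2 =
    (∑ i, algebraMap ℂ (RatFunc ℂ) ((m i : ℂ) ^ 2 - (m i : ℂ)) /
        (RatFunc.X - algebraMap ℂ (RatFunc ℂ) (β i)) ^ 2) +
    ∑ i, ∑ j ∈ Finset.univ.filter (· ≠ i),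
      algebraMap ℂ (RatFunc ℂ) (2 * (m i : ℂ) * (m j : ℂ) / (β i - β j)) /
        (RatFunc.X - algebraMap ℂ (RatFunc ℂ) (β i)) := by
  have hX : ∀ i, RatFunc.X - algebraMap ℂ (RatFunc ℂ) (β i) ≠ 0 := fun i => by
    rw [← algebraMap_X_sub_C]
    exact RatFunc.algebraMap_ne_zero (X_sub_C_ne_zero _)
  change derivRatLogDeriv P + v ^ 2 = _
  rw [hv, ← ratLogDeriv, hP, derivRatLogDeriv_prod_X_sub_C_pow, ratLogDeriv_prod_X_sub_C_pow,
    sq_sum_div_sub_eq _ (b := fun i => algebraMap ℂ (RatFunc ℂ) (β i))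
      ((algebraMap ℂ (RatFunc ℂ)).injective.comp hβ) hX, ← add_assoc,
    ← Finset.sum_add_distrib]
  congr 1
  · refine Finset.sum_congr rfl fun i _ => ?_
    simp only [map_sub, map_pow, map_natCast]
    ring
  · simp only [map_div₀, map_mul, map_sub, map_natCast, map_ofNat]

theorem stmt_0 (s : ℕ) (β : Fin s → ℂ) (hβ : Function.Injective β)
    (m : Fin s → ℕ) (hm : ∀ i, 1 ≤ m i)
    (P : Polynomial ℂ) (hP : P = ∏ i, (X - C (β i)) ^ m i)
    (hnc : 0 < P.degree)
    (v : RatFunc ℂ)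
    (hv : v = algebraMap (Polynomial ℂ) (RatFunc ℂ) (derivative P) /
        algebraMap (Polynomial ℂ) (RatFunc ℂ) P) :
    (algebraMap (Polynomial ℂ) (RatFunc ℂ) (derivative (derivative P)) *
        algebraMap (Polynomial ℂ) (RatFunc ℂ) P -
      (algebraMap (Polynomial ℂ) (RatFunc ℂ) (derivative P)) ^ 2) /
        (algebraMap (Polynomial ℂ) (RatFunc ℂ) P) ^ 2 + v ^ 2 =
    (∑ i, algebraMap ℂ (RatFunc ℂ) ((m i : ℂ) ^ 2 - (m i : ℂ)) /
        (RatFunc.X - algebraMap ℂ (RatFunc ℂ) (β i)) ^ 2) +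
    ∑ i, ∑ j ∈ Finset.univ.filter (· ≠ i),
      algebraMap ℂ (RatFunc ℂ) (2 * (m i : ℂ) * (m j : ℂ) / (β i - β j)) /
        (RatFunc.X - algebraMap ℂ (RatFunc ℂ) (β i)) :=
  stmt_0_general s β hβ m P hP v hv
end

section
/- (Gauss–Lucas) Every root of the derivative P' of a nonconstant complex polynomial P lies in the convex hull of the set of roots of P. -/
open Polynomial

theorem stmt_4 (P : Polynomial ℂ) (hP : 0 < P.degree) (z : ℂ)
    (hz : P.derivative.eval z = 0) :
    z ∈ convexHull ℝ {w : ℂ | P.eval w = 0} := by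
  have hP₀ : P ≠ 0 := ne_zero_of_degree_gt hP
  have hP' : P.derivative ≠ 0 := fun h ↦
    (natDegree_pos_iff_degree_pos.mpr hP).ne' (derivative_eq_zero.mp h)
  have hroots : P.rootSet ℂ = {w : ℂ | P.eval w = 0} := by
    ext w
    simp [mem_rootSet, hP₀]
  rw [← hroots]
  exact rootSet_derivative_subset_convexHull_rootSet hP (by simp [mem_rootSet, hP', hz])
end

section
/- Let P ∈ ℂ[x] be monic nonconstant with v = P'/P, and suppose v satisfies v' + v^2 = [(1+b)/(1-x) - (1+a)/(1+x)]·v - λ/(1-x^2) as rational functions (the unperturbed Riccati equation), with a, b > -1 real and λ ∈ ℂ. Then P has no root at 1 or -1, and all roots of P are simple. -/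
/-!
Clearing denominators turns the Riccati equation for `v = P'/P` into the linear equation
`(1 - x²) P'' = ((1 + b)(1 + x) - (1 + a)(1 - x)) P' - λ P`.
Writing `P = (x - β)^m Q` with `Q(β) ≠ 0`, the lowest-order terms at `β` give the indicial
equation: `m (m - 1) = 0` where `1 - β² ≠ 0`, and `m (m + b) = 0`, resp. `m (m + a) = 0`,
at `β = 1`, resp. `β = -1`. Since `a, b > -1`, the latter force `m = 0`.
-/

open Polynomial

section

variable {R : Type*} [CommRing R]

theorem X_sub_C_mul_derivative_X_sub_C_pow_mul (β : R) (m : ℕ) (Q : R[X]) :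
    (X - C β) * derivative ((X - C β) ^ m * Q) =
      (X - C β) ^ m * (C (m : R) * Q + (X - C β) * derivative Q) := by
  rcases m with _ | m
  · simp
  · rw [derivative_mul, derivative_X_sub_C_pow, Nat.add_sub_cancel]
    ring

theorem X_sub_C_sq_mul_derivative_derivative (β : R) (F : R[X]) :
    (X - C β) ^ 2 * derivative (derivative F) =
      (X - C β) * derivative ((X - C β) * derivative F) - (X - C β) * derivative F := by
  rw [derivative_mul, derivative_X_sub_C]
  ring

theorem X_sub_C_sq_mul_derivative_derivative_X_sub_C_pow_mul (β : R) (m : ℕ) (Q : R[X]) :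
    (X - C β) ^ 2 * derivative (derivative ((X - C β) ^ m * Q)) =
      (X - C β) ^ m * (C ((m : R) * (m - 1)) * Q + C (2 * m : R) * (X - C β) * derivative Q +
        (X - C β) ^ 2 * derivative (derivative Q)) := by
  rw [X_sub_C_sq_mul_derivative_derivative, X_sub_C_mul_derivative_X_sub_C_pow_mul,
    X_sub_C_mul_derivative_X_sub_C_pow_mul]
  simp only [derivative_add, derivative_mul, derivative_C, derivative_X, map_mul, map_sub,
    map_ofNat, map_one]
  ring

end

theorem indicial_equation {R : Type*} [CommRing R] [IsDomain R] {P r₀ r₁ r₂ : R[X]} (β : R)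
    (hP : P ≠ 0)
    (h : (X - C β) ^ 2 * r₂ * derivative (derivative P) =
      (X - C β) * r₁ * derivative P + r₀ * P) :
    r₂.eval β * ((P.rootMultiplicity β : R) * (P.rootMultiplicity β - 1)) =
      r₁.eval β * P.rootMultiplicity β + r₀.eval β := by
  obtain ⟨Q, hQ, hβQ⟩ := P.exists_eq_pow_rootMultiplicity_mul_and_not_dvd hP β
  have hQβ : Q.eval β ≠ 0 := fun h => hβQ (dvd_iff_isRoot.2 h)
  set m := P.rootMultiplicity β
  have e₁ := X_sub_C_mul_derivative_X_sub_C_pow_mul β m Q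
  have e₂ := X_sub_C_sq_mul_derivative_derivative_X_sub_C_pow_mul β m Q
  rw [← hQ] at e₁ e₂
  have hm : (X - C β) ^ m * (r₂ * (C ((m : R) * (m - 1)) * Q + C (2 * m : R) * (X - C β) *
      derivative Q + (X - C β) ^ 2 * derivative (derivative Q))) =
      (X - C β) ^ m * (r₁ * (C (m : R) * Q + (X - C β) * derivative Q) + r₀ * Q) := by
    linear_combination h - r₂ * e₂ + r₁ * e₁ + r₀ * hQ
  have h' := congrArg (eval β) (mul_left_cancel₀ (pow_ne_zero m (X_sub_C_ne_zero β)) hm)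
  simp only [eval_mul, eval_add, eval_C, eval_sub, eval_X, sub_self, zero_mul, mul_zero,
    add_zero, eval_pow] at h'
  refine mul_right_cancel₀ hQβ ?_
  linear_combination h'

theorem polynomial_ode_of_riccati {K : Type*} [Field K] {P : K[X]} (hP : P ≠ 0) {p q l : K}
    (h : (algebraMap K[X] (RatFunc K) (derivative (derivative P)) *
            algebraMap K[X] (RatFunc K) P - (algebraMap K[X] (RatFunc K) (derivative P)) ^ 2) /
          (algebraMap K[X] (RatFunc K) P) ^ 2 +
        (algebraMap K[X] (RatFunc K) (derivative P) / algebraMap K[X] (RatFunc K) P) ^ 2 =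
      (algebraMap K (RatFunc K) p / (1 - RatFunc.X) -
          algebraMap K (RatFunc K) q / (1 + RatFunc.X)) *
          (algebraMap K[X] (RatFunc K) (derivative P) / algebraMap K[X] (RatFunc K) P) -
        algebraMap K (RatFunc K) l / (1 - RatFunc.X ^ 2)) :
    (1 - X ^ 2) * derivative (derivative P) =
      (C p * (1 + X) - C q * (1 - X)) * derivative P - C l * P := by
  set A := algebraMap K[X] (RatFunc K)
  have hA : ∀ f : K[X], f ≠ 0 → A f ≠ 0 := fun f hf =>
    (map_ne_zero_iff _ (RatFunc.algebraMap_injective K)).2 hf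
  have hXC : ∀ c : K, RatFunc.X - RatFunc.C c ≠ 0 := fun c => by
    simpa [A, RatFunc.algebraMap_X] using hA _ (X_sub_C_ne_zero c)
  have hsub : (1 : RatFunc K) - RatFunc.X ≠ 0 := fun h0 =>
    hXC 1 (by rw [map_one]; linear_combination -h0)
  have hadd : (1 : RatFunc K) + RatFunc.X ≠ 0 := fun h0 =>
    hXC (-1) (by rw [map_neg, map_one]; linear_combination h0)
  have hPA := hA P hP
  rw [show (1 : RatFunc K) - RatFunc.X ^ 2 = (1 - RatFunc.X) * (1 + RatFunc.X) by ring] at h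
  field_simp at h
  apply RatFunc.algebraMap_injective K
  refine mul_left_cancel₀ hPA ?_
  simp only [map_mul, map_sub, map_add, map_one, map_pow, RatFunc.algebraMap_X,
    RatFunc.algebraMap_C, ← RatFunc.algebraMap_eq_C]
  linear_combination h

theorem rootMultiplicity_le_one_of_ode {R : Type*} [CommRing R] [IsDomain R] [CharZero R]
    {P p₀ p₁ p₂ : R[X]} {β : R} (hP : P ≠ 0) (hβ : p₂.eval β ≠ 0)
    (h : p₂ * derivative (derivative P) = p₁ * derivative P + p₀ * P) :
    P.rootMultiplicity β ≤ 1 := by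
  have hind := indicial_equation (r₂ := p₂) (r₁ := (X - C β) * p₁)
    (r₀ := (X - C β) ^ 2 * p₀) β hP (by linear_combination (X - C β) ^ 2 * h)
  simp only [eval_mul, eval_pow, eval_sub, eval_X, eval_C, sub_self, zero_mul, add_zero,
    ne_eq, OfNat.ofNat_ne_zero, not_false_eq_true, zero_pow] at hind
  rcases (mul_eq_zero.1 hind).resolve_left hβ |> mul_eq_zero.1 with hm | hm
  · exact (Nat.cast_eq_zero.1 hm).trans_le zero_le_one
  · exact (Nat.cast_eq_one.1 (sub_eq_zero.1 hm)).le

theorem eval_ne_zero_of_ode_singular {P p₀ p₁ q : ℂ[X]} {β : ℂ} {c : ℝ} (hc : -1 < c)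
    (hP : P ≠ 0) (hq : q.eval β ≠ 0)
    (h : (X - C β) * q * derivative (derivative P) = p₁ * derivative P + p₀ * P)
    (hp₁ : p₁.eval β = -(1 + c) * q.eval β) :
    P.eval β ≠ 0 := by
  have hind := indicial_equation (r₂ := q) (r₁ := p₁) (r₀ := (X - C β) * p₀) β hP
    (by linear_combination (X - C β) * h)
  set m := P.rootMultiplicity β
  simp only [eval_mul, eval_sub, eval_X, eval_C, sub_self, zero_mul, add_zero, hp₁] at hind
  have hmc : ((m * (m + c) : ℝ) : ℂ) = 0 := by
    refine mul_left_cancel₀ hq ?_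
    push_cast
    linear_combination hind
  have hm : m = 0 := by
    rcases mul_eq_zero.1 (Complex.ofReal_eq_zero.1 hmc) with hm | hm
    · exact_mod_cast hm
    · have : (m : ℝ) < 1 := by linarith
      exact Nat.lt_one_iff.1 (by exact_mod_cast this)
  intro hroot
  exact (rootMultiplicity_pos hP).2 hroot |>.ne' hm

theorem stmt_18_general (a b : ℝ) (ha : a > -1) (hb : b > -1) (lam : ℂ)
    (P : Polynomial ℂ) (hPmonic : P.Monic)
    (v : RatFunc ℂ)
    (hv : v = algebraMap (Polynomial ℂ) (RatFunc ℂ) (derivative P) /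
        algebraMap (Polynomial ℂ) (RatFunc ℂ) P)
    (hric : (algebraMap (Polynomial ℂ) (RatFunc ℂ) (derivative (derivative P)) *
          algebraMap (Polynomial ℂ) (RatFunc ℂ) P -
        (algebraMap (Polynomial ℂ) (RatFunc ℂ) (derivative P)) ^ 2) /
          (algebraMap (Polynomial ℂ) (RatFunc ℂ) P) ^ 2 + v ^ 2 =
      (algebraMap ℂ (RatFunc ℂ) (1 + (b : ℂ)) / (1 - RatFunc.X) -
        algebraMap ℂ (RatFunc ℂ) (1 + (a : ℂ)) / (1 + RatFunc.X)) * v -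
      algebraMap ℂ (RatFunc ℂ) lam / (1 - RatFunc.X ^ 2)) :
    P.eval 1 ≠ 0 ∧ P.eval (-1) ≠ 0 ∧
      ∀ β : ℂ, P.eval β = 0 → P.rootMultiplicity β = 1 := by
  have hP := hPmonic.ne_zero
  subst hv
  set p₁ : ℂ[X] := C (1 + (b : ℂ)) * (1 + X) - C (1 + (a : ℂ)) * (1 - X)
  have hode : (1 - X ^ 2) * derivative (derivative P) = p₁ * derivative P + -C lam * P := by
    linear_combination polynomial_ode_of_riccati hP hric
  have h₁ : P.eval 1 ≠ 0 :=
    eval_ne_zero_of_ode_singular (q := -(X + 1)) (p₁ := p₁) (p₀ := -C lam) hb hP (by norm_num)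
      (by rw [map_one]; linear_combination hode)
      (by simp only [p₁, eval_sub, eval_add, eval_mul, eval_neg, eval_C, eval_one, eval_X]; ring)
  have hneg1 : P.eval (-1) ≠ 0 :=
    eval_ne_zero_of_ode_singular (q := 1 - X) (p₁ := p₁) (p₀ := -C lam) ha hP (by norm_num)
      (by rw [map_neg, map_one]; linear_combination hode)
      (by simp only [p₁, eval_sub, eval_add, eval_mul, eval_C, eval_one, eval_X]; ring)
  refine ⟨h₁, hneg1, fun β hβ => le_antisymm ?_ ((rootMultiplicity_pos hP).2 hβ)⟩
  refine rootMultiplicity_le_one_of_ode hP ?_ hode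
  have hβ₁ : 1 - β ≠ 0 := sub_ne_zero.2 (by rintro rfl; exact h₁ hβ)
  have hβ₂ : 1 + β ≠ 0 := fun h => hneg1 (by rwa [← eq_neg_of_add_eq_zero_right h])
  convert mul_ne_zero hβ₁ hβ₂ using 1
  simp only [eval_sub, eval_one, eval_pow, eval_X]
  ring

theorem stmt_18 (a b : ℝ) (ha : a > -1) (hb : b > -1) (lam : ℂ)
    (P : Polynomial ℂ) (hPmonic : P.Monic) (hP : 0 < P.degree)
    (v : RatFunc ℂ)
    (hv : v = algebraMap (Polynomial ℂ) (RatFunc ℂ) (derivative P) /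
        algebraMap (Polynomial ℂ) (RatFunc ℂ) P)
    (hric : (algebraMap (Polynomial ℂ) (RatFunc ℂ) (derivative (derivative P)) *
          algebraMap (Polynomial ℂ) (RatFunc ℂ) P -
        (algebraMap (Polynomial ℂ) (RatFunc ℂ) (derivative P)) ^ 2) /
          (algebraMap (Polynomial ℂ) (RatFunc ℂ) P) ^ 2 + v ^ 2 =
      (algebraMap ℂ (RatFunc ℂ) (1 + (b : ℂ)) / (1 - RatFunc.X) -
        algebraMap ℂ (RatFunc ℂ) (1 + (a : ℂ)) / (1 + RatFunc.X)) * v -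
      algebraMap ℂ (RatFunc ℂ) lam / (1 - RatFunc.X ^ 2)) :
    P.eval 1 ≠ 0 ∧ P.eval (-1) ≠ 0 ∧
      ∀ β : ℂ, P.eval β = 0 → P.rootMultiplicity β = 1 :=
  stmt_18_general a b ha hb lam P hPmonic v hv hric
end
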